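/- Let M* ∈ ℝ^{d×d} be symmetric PSD of rank r with eigenvalues σ₁* ≥ ⋯ ≥ σ_r* > 0 and orthonormal eigenvectors a₁*, …, a_r*. Let M = M* + H be symmetric with top eigenvalue σ₁ and top unit eigenvector a₁, where H is symmetric with ‖H‖₂ ≤ σ₁*/8. Then ‖a₁ − ∑_{j=1}^r (σ_j*/σ₁)(a₁ᵀ a_j*) a_j*‖₂ ≤ (4/3)‖H‖₂/σ₁. -/
import Mathlib


open Matrix Finset

/-- Euclidean norm of a vector in `Fin d → ℝ`. -/
noncomputable def vnorm {d : ℕ} (x : Fin d → ℝ) : ℝ := Real.sqrt (∑ i, x i ^ 2)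

/-- Spectral (ℓ₂ operator) norm of a real matrix. -/
noncomputable def specNorm {d : ℕ} (A : Matrix (Fin d) (Fin d) ℝ) : ℝ :=
  sSup {y : ℝ | ∃ x : Fin d → ℝ, vnorm x = 1 ∧ y = vnorm (A.mulVec x)}

lemma vnorm_nonneg {d : ℕ} (x : Fin d → ℝ) : 0 ≤ vnorm x := Real.sqrt_nonneg _

lemma vnorm_sq {d : ℕ} (x : Fin d → ℝ) : vnorm x ^ 2 = ∑ i, x i ^ 2 :=
  Real.sq_sqrt (Finset.sum_nonneg fun i _ => sq_nonneg _)

lemma vnorm_smul {d : ℕ} (c : ℝ) (x : Fin d → ℝ) : vnorm (c • x) = |c| * vnorm x := by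
  unfold vnorm
  have h : ∑ i, (c • x) i ^ 2 = c ^ 2 * ∑ i, x i ^ 2 := by
    rw [Finset.mul_sum]
    refine Finset.sum_congr rfl fun i _ => ?_
    simp [mul_pow]
  rw [h, Real.sqrt_mul (sq_nonneg c), Real.sqrt_sq_eq_abs]

lemma abs_dot_le {d : ℕ} (x y : Fin d → ℝ) : |x ⬝ᵥ y| ≤ vnorm x * vnorm y := by
  have h := Finset.sum_mul_sq_le_sq_mul_sq Finset.univ x y
  have hsq : (x ⬝ᵥ y) ^ 2 ≤ (vnorm x * vnorm y) ^ 2 := by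
    rw [mul_pow, vnorm_sq, vnorm_sq]; exact h
  calc |x ⬝ᵥ y| = Real.sqrt ((x ⬝ᵥ y) ^ 2) := (Real.sqrt_sq_eq_abs _).symm
    _ ≤ Real.sqrt ((vnorm x * vnorm y) ^ 2) := Real.sqrt_le_sqrt hsq
    _ = |vnorm x * vnorm y| := Real.sqrt_sq_eq_abs _
    _ = vnorm x * vnorm y := abs_of_nonneg (mul_nonneg (vnorm_nonneg x) (vnorm_nonneg y))

lemma mulVec_vnorm_le {d : ℕ} (A : Matrix (Fin d) (Fin d) ℝ) (x : Fin d → ℝ) :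
    vnorm (A.mulVec x) ≤ Real.sqrt (∑ i, ∑ j, A i j ^ 2) * vnorm x := by
  have key : ∑ i, (A.mulVec x) i ^ 2 ≤ (∑ i, ∑ j, A i j ^ 2) * ∑ j, x j ^ 2 := by
    rw [Finset.sum_mul]
    refine Finset.sum_le_sum fun i _ => ?_
    simpa [Matrix.mulVec, dotProduct] using
      Finset.sum_mul_sq_le_sq_mul_sq Finset.univ (fun j => A i j) x
  calc vnorm (A.mulVec x) = Real.sqrt (∑ i, (A.mulVec x) i ^ 2) := rfl
    _ ≤ Real.sqrt ((∑ i, ∑ j, A i j ^ 2) * ∑ j, x j ^ 2) := Real.sqrt_le_sqrt key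
    _ = Real.sqrt (∑ i, ∑ j, A i j ^ 2) * Real.sqrt (∑ j, x j ^ 2) :=
        Real.sqrt_mul (Finset.sum_nonneg fun i _ => Finset.sum_nonneg fun j _ => sq_nonneg _) _
    _ = Real.sqrt (∑ i, ∑ j, A i j ^ 2) * vnorm x := rfl

lemma le_specNorm {d : ℕ} (A : Matrix (Fin d) (Fin d) ℝ) (x : Fin d → ℝ) (hx : vnorm x = 1) :
    vnorm (A.mulVec x) ≤ specNorm A := by
  refine le_csSup ⟨Real.sqrt (∑ i, ∑ j, A i j ^ 2), ?_⟩ ⟨x, hx, rfl⟩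
  rintro y ⟨z, hz, rfl⟩
  simpa [hz] using mulVec_vnorm_le A z

lemma sum_mulVec' {d : ℕ} {ι : Type*} (s : Finset ι) (f : ι → Matrix (Fin d) (Fin d) ℝ)
    (x : Fin d → ℝ) : (∑ j ∈ s, f j).mulVec x = ∑ j ∈ s, (f j).mulVec x := by
  induction s using Finset.cons_induction with
  | empty => simp [Matrix.zero_mulVec]
  | cons a s ha ih => simp [Finset.sum_cons, Matrix.add_mulVec, ih]

lemma dot_sum' {d : ℕ} {ι : Type*} (s : Finset ι) (x : Fin d → ℝ) (f : ι → Fin d → ℝ) :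
    x ⬝ᵥ ∑ j ∈ s, f j = ∑ j ∈ s, x ⬝ᵥ f j := by
  induction s using Finset.cons_induction with
  | empty => simp
  | cons a s ha ih => simp [Finset.sum_cons, dotProduct_add, ih]

lemma vecMulVec_mulVec' {d : ℕ} (w v x : Fin d → ℝ) :
    (vecMulVec w v).mulVec x = (v ⬝ᵥ x) • w := by
  ext i
  simp [Matrix.mulVec, dotProduct, vecMulVec_apply, Finset.mul_sum, mul_comm,
    mul_left_comm]

/-- Neumann-expansion approximation of the top eigenvector of a
perturbed low-rank PSD matrix. -/
theorem neumann_subspace_approx {d r : ℕ} (hr : 0 < r)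
    (Mstar H M : Matrix (Fin d) (Fin d) ℝ)
    (hM : M = Mstar + H) (hHsym : H.IsSymm) (hMsym : M.IsSymm)
    (σs : ℕ → ℝ) (as : ℕ → Fin d → ℝ)
    (hanti : ∀ i j, i ≤ j → j < r → σs j ≤ σs i)
    (hpos : ∀ j, j < r → 0 < σs j)
    (hortho : ∀ i j, i < r → j < r → as i ⬝ᵥ as j = if i = j then 1 else 0)
    (hdecomp : Mstar = ∑ j ∈ Finset.range r, σs j • vecMulVec (as j) (as j))
    (σ1 : ℝ) (a1 : Fin d → ℝ) (ha1 : vnorm a1 = 1)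
    (heig : M.mulVec a1 = σ1 • a1)
    (htop : ∀ x : Fin d → ℝ, x ⬝ᵥ M.mulVec x ≤ σ1 * (x ⬝ᵥ x))
    (hH : specNorm H ≤ σs 0 / 8) :
    vnorm (a1 - ∑ j ∈ Finset.range r, ((σs j / σ1) * (a1 ⬝ᵥ as j)) • as j)
      ≤ (4 / 3) * specNorm H / σ1 := by
  -- basic facts
  have ha0unit : as 0 ⬝ᵥ as 0 = 1 := by simpa using hortho 0 0 hr hr
  have hvnorm_a0 : vnorm (as 0) = 1 := by
    have : ∑ i, as 0 i ^ 2 = 1 := by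
      simpa [dotProduct, sq] using ha0unit
    simp [vnorm, this]
  have hspecH_nonneg : 0 ≤ specNorm H :=
    le_trans (vnorm_nonneg _) (le_specNorm H (as 0) hvnorm_a0)
  -- expansion of Mstar.mulVec
  have hexp : ∀ x : Fin d → ℝ,
      Mstar.mulVec x = ∑ j ∈ Finset.range r, (σs j * (as j ⬝ᵥ x)) • as j := by
    intro x
    rw [hdecomp, sum_mulVec']
    refine Finset.sum_congr rfl fun j _ => ?_
    rw [Matrix.smul_mulVec, vecMulVec_mulVec', smul_smul]
  -- σ1 positivity
  have ha0M : as 0 ⬝ᵥ Mstar.mulVec (as 0) = σs 0 := by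
    rw [hexp]
    rw [dot_sum']
    rw [Finset.sum_eq_single 0]
    · simp [dotProduct_smul, ha0unit]
    · intro j hj hj0
      have h1 : as 0 ⬝ᵥ as j = 0 := by
        have := hortho 0 j hr (Finset.mem_range.mp hj)
        simpa [Ne.symm hj0] using this
      simp [dotProduct_smul, h1]
    · intro h; exact absurd (Finset.mem_range.mpr hr) h
  have ha0H : |as 0 ⬝ᵥ H.mulVec (as 0)| ≤ specNorm H := by
    calc |as 0 ⬝ᵥ H.mulVec (as 0)| ≤ vnorm (as 0) * vnorm (H.mulVec (as 0)) := abs_dot_le _ _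
      _ = vnorm (H.mulVec (as 0)) := by rw [hvnorm_a0, one_mul]
      _ ≤ specNorm H := le_specNorm H (as 0) hvnorm_a0
  have hσ1pos : 0 < σ1 := by
    have h1 := htop (as 0)
    rw [hM, Matrix.add_mulVec, dotProduct_add, ha0M, ha0unit, mul_one] at h1
    have h2 : -(specNorm H) ≤ as 0 ⬝ᵥ H.mulVec (as 0) := neg_le_of_abs_le ha0H
    have h3 : σs 0 - specNorm H ≤ σ1 := by linarith
    have h4 : 0 < σs 0 := hpos 0 hr
    linarith
  have hσ1ne : σ1 ≠ 0 := ne_of_gt hσ1pos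
  -- the difference vector is exactly σ1⁻¹ • H.mulVec a1
  have hsum : ∑ j ∈ Finset.range r, ((σs j / σ1) * (a1 ⬝ᵥ as j)) • as j
      = σ1⁻¹ • Mstar.mulVec a1 := by
    rw [hexp, Finset.smul_sum]
    refine Finset.sum_congr rfl fun j _ => ?_
    rw [smul_smul, dotProduct_comm (as j) a1]
    ring_nf
  have hMa1 : Mstar.mulVec a1 + H.mulVec a1 = σ1 • a1 := by
    rw [← Matrix.add_mulVec, ← hM, heig]
  have hdiff : a1 - ∑ j ∈ Finset.range r, ((σs j / σ1) * (a1 ⬝ᵥ as j)) • as j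
      = σ1⁻¹ • H.mulVec a1 := by
    rw [hsum]
    have : Mstar.mulVec a1 = σ1 • a1 - H.mulVec a1 := by
      rw [← hMa1]; abel
    rw [this, smul_sub, smul_smul, inv_mul_cancel₀ hσ1ne, one_smul]
    abel
  rw [hdiff, vnorm_smul, abs_of_nonneg (inv_nonneg.mpr (le_of_lt hσ1pos))]
  have hHa1 : vnorm (H.mulVec a1) ≤ specNorm H := le_specNorm H a1 ha1
  calc σ1⁻¹ * vnorm (H.mulVec a1) ≤ σ1⁻¹ * specNorm H := by
        exact mul_le_mul_of_nonneg_left hHa1 (inv_nonneg.mpr (le_of_lt hσ1pos))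
    _ ≤ (4 / 3) * specNorm H / σ1 := by
        rw [div_eq_mul_inv]
        nlinarith [inv_nonneg.mpr (le_of_lt hσ1pos)]
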